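/- Let A⁺, A⁻ ⊆ ℝⁿ be disjoint finite sets with A⁺ ≠ ∅ and A⁻ ≠ ∅, and set A = A⁺ ∪ A⁻. Then the dual cone of the signed SONC cone C_{(A⁺,A⁻)} consists exactly of those v : A → ℝ with v_α ≥ 0 for all α ∈ A⁺ and such that for every β ∈ A⁻ and every λ ∈ Λ(A⁺,β) one has v_β ≤ ∏_{α∈A⁺} v_α^{λ_α} (real powers, with the convention 0⁰ = 1). -/

import Mathlib

open Finset

/-- The exponential sum with support `A` and coefficient vector `v`. -/
noncomputable def expSum {n : ℕ} (A : Finset (Fin n → ℝ)) (v : (Fin n → ℝ) → ℝ)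
    (x : Fin n → ℝ) : ℝ :=
  ∑ γ ∈ A, v γ * Real.exp (∑ i, x i * γ i)

/-- The signed SONC (= SAGE) cone `C_{(A⁺,A⁻)}`. -/
def InSAGE {n : ℕ} (Ap An : Finset (Fin n → ℝ)) (c : (Fin n → ℝ) → ℝ) : Prop :=
  (∀ α ∈ Ap, 0 ≤ c α) ∧ (∀ β ∈ An, c β ≤ 0) ∧
  ∃ (m : ℕ) (d : Fin m → (Fin n → ℝ) → ℝ),
    (∀ γ ∈ Ap ∪ An, c γ = ∑ i, d i γ) ∧
    (∀ i, ∀ γ₁ ∈ Ap ∪ An, ∀ γ₂ ∈ Ap ∪ An, d i γ₁ < 0 → d i γ₂ < 0 → γ₁ = γ₂) ∧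
    (∀ i, ∀ x : Fin n → ℝ, 0 ≤ expSum (Ap ∪ An) (d i) x)

/-- The dual cone of a set `K` of coefficient vectors on the support `A`. -/
def dualCone {n : ℕ} (A : Finset (Fin n → ℝ)) (K : Set ((Fin n → ℝ) → ℝ)) :
    Set ((Fin n → ℝ) → ℝ) :=
  {v | ∀ c ∈ K, 0 ≤ ∑ γ ∈ A, v γ * c γ}

/-- `Λ(A⁺, β)`: barycentric coordinates of `β` with respect to `A⁺`. -/
def IsBary {n : ℕ} (Ap : Finset (Fin n → ℝ)) (β : Fin n → ℝ) (lam : (Fin n → ℝ) → ℝ) : Prop :=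
  (∀ α ∈ Ap, 0 ≤ lam α) ∧ (∑ α ∈ Ap, lam α = 1) ∧ (∑ α ∈ Ap, lam α • α = β)

/-!
Testing `v` against `∑ α, λ_α s_α e_α - (∏ α, s_α ^ λ_α) e_β`, which is a signed AGE vector by
weighted AM-GM, with `s_α = (v_α + η)⁻¹` and `η → 0`, gives the inequalities `v_β ≤ ∏ v_α ^ λ_α`.

Conversely, the pieces of a SAGE decomposition of `c` are grouped by the position of their
negative coefficient, and mass is moved between the groups one support point at a time until
every group is nonnegative on `A⁺` and nonpositive on `A⁻`; this uses only the sign pattern of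
`c`. Such a group has its only negative coefficient `-b` at some `β ∈ A⁻`, and the bounds on
`v_β` yield, by Farkas' lemma, for every `η > 0` a point `x` with
`v_β e^{⟨x, α - β⟩} ≤ e^η (v_α + η)` on `A⁺`; evaluating the nonnegative exponential sum at `x`
shows that the group pairs nonnegatively with `v`.
-/

namespace SAGE

open Matrix

lemma disjoint_convexHull_image_prod_Iic {E : Type*} [AddCommGroup E] [Module ℝ E]
    {S : Finset E} {β : E} {c : E → ℝ}
    (hc : ∀ lam : E → ℝ, (∀ α ∈ S, 0 ≤ lam α) → ∑ α ∈ S, lam α = 1 →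
      ∑ α ∈ S, lam α • α = β → 0 ≤ ∑ α ∈ S, lam α * c α)
    {δ : ℝ} (hδ : 0 < δ) :
    Disjoint (convexHull ℝ ((fun α => (α, c α)) '' S)) ({β} ×ˢ Set.Iic (-δ)) := by
  classical
  refine Set.disjoint_left.2 fun ⟨e, t⟩ hK ⟨(he : e = β), (ht : t ≤ -δ)⟩ => ?_
  rw [← Finset.coe_image] at hK
  obtain ⟨μ, hμ0, hμ1, hμ⟩ := Finset.mem_convexHull'.1 hK
  rw [Finset.sum_image fun _ _ _ _ h => congrArg Prod.fst h] at hμ1 hμ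
  have hβ : ∑ α ∈ S, μ (α, c α) • α = β := he ▸ by
    simpa [Prod.fst_sum] using congrArg Prod.fst hμ
  have ht' : ∑ α ∈ S, μ (α, c α) * c α = t := by
    simpa [Prod.snd_sum] using congrArg Prod.snd hμ
  have := hc (fun α => μ (α, c α)) (fun α hα => hμ0 _ (Finset.mem_image_of_mem _ hα)) hμ1 hβ
  linarith

/-- Rescaling a functional `φ` that separates the points `(α, c α)` from the ray
`{β} × (-∞, -δ]`, where `(e, t) ↦ φ e + t s`. -/
lemma exists_mul_sub_le_add {ι : Type*} {S : Finset ι} {a c : ι → ℝ} {b s u v δ : ℝ}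
    (hδ : 0 ≤ δ) (huv : u < v) (hS : ∀ i ∈ S, a i + c i * s < u) (hb : ∀ t ≤ -δ, v < b + t * s) :
    ∃ r, ∀ i ∈ S, r * (a i - b) ≤ c i + δ := by
  rcases lt_trichotomy s 0 with hs | rfl | hs
  · refine ⟨(-s)⁻¹, fun i hi => ?_⟩
    have := hS i hi
    have := hb (-δ) le_rfl
    rw [inv_mul_le_iff₀ (neg_pos.2 hs)]
    nlinarith
  · set M := ∑ i ∈ S, |c i|
    have hM : 0 ≤ M / (v - u) :=
      div_nonneg (Finset.sum_nonneg fun _ _ => abs_nonneg _) (sub_nonneg.2 huv.le)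
    refine ⟨M / (v - u), fun i hi => ?_⟩
    have hai := hS i hi
    have hb' := hb (-δ) le_rfl
    have hcM : -M ≤ c i :=
      (neg_le_neg (Finset.single_le_sum (fun _ _ => abs_nonneg _) hi)).trans (neg_abs_le _)
    simp only [mul_zero, add_zero] at hai hb'
    calc M / (v - u) * (a i - b) ≤ M / (v - u) * (u - v) :=
          mul_le_mul_of_nonneg_left (by linarith) hM
      _ = -M := by field_simp [(sub_pos.2 huv).ne']; ring
      _ ≤ c i + δ := by linarith
  · have h := hb (min (-δ) ((v - b) / s)) (min_le_left _ _)
    have : min (-δ) ((v - b) / s) * s ≤ v - b :=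
      (mul_le_mul_of_nonneg_right (min_le_right _ _) hs.le).trans_eq (div_mul_cancel₀ _ hs.ne')
    linarith

/-- An approximate Farkas lemma. -/
theorem exists_strongDual_sub_le_add {E : Type*} [NormedAddCommGroup E] [NormedSpace ℝ E]
    {S : Finset E} {β : E} {c : E → ℝ}
    (hc : ∀ lam : E → ℝ, (∀ α ∈ S, 0 ≤ lam α) → ∑ α ∈ S, lam α = 1 →
      ∑ α ∈ S, lam α • α = β → 0 ≤ ∑ α ∈ S, lam α * c α)
    {δ : ℝ} (hδ : 0 < δ) : ∃ f : StrongDual ℝ E, ∀ α ∈ S, f α - f β ≤ c α + δ := by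
  obtain ⟨f, u, v, hfK, huv, hfR⟩ := geometric_hahn_banach_compact_closed
    (s := convexHull ℝ ((fun α => (α, c α)) '' S)) (t := {β} ×ˢ Set.Iic (-δ))
    (convex_convexHull ℝ _) ((S.finite_toSet.image _).isCompact_convexHull ℝ)
    ((convex_singleton β).prod (convex_Iic _)) (isClosed_singleton.prod isClosed_Iic)
    (disjoint_convexHull_image_prod_Iic hc hδ)
  set φ : StrongDual ℝ E := f.comp (ContinuousLinearMap.inl ℝ E ℝ)
  have hf : ∀ e t, f (e, t) = φ e + t * f (0, 1) := fun e t => by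
    rw [show (e, t) = (e, 0) + t • ((0 : E), (1 : ℝ)) by simp, map_add, map_smul, smul_eq_mul]
    rfl
  obtain ⟨r, hr⟩ := exists_mul_sub_le_add hδ.le huv
    (fun α hα => hf α (c α) ▸ hfK _ (subset_convexHull ℝ _ (Set.mem_image_of_mem _ hα)))
    (fun t ht => hf β t ▸ hfR (β, t) ⟨rfl, ht⟩)
  refine ⟨r • φ, fun α hα => ?_⟩
  simpa only [FunLike.coe_smul, Pi.smul_apply, smul_eq_mul, ← mul_sub] using hr α hα

lemma le_of_forall_pos_le_of_continuous {f : ℝ → ℝ} (hf : Continuous f) {a : ℝ}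
    (h : ∀ η > 0, a ≤ f η) : a ≤ f 0 :=
  ge_of_tendsto ((hf.tendsto 0).mono_left nhdsWithin_le_nhds)
    (eventually_nhdsWithin_of_forall (s := Set.Ioi 0) h)

variable {n : ℕ}

lemma expSum_eq (A : Finset (Fin n → ℝ)) (p : (Fin n → ℝ) → ℝ) (x : Fin n → ℝ) :
    expSum A p x = ∑ γ ∈ A, p γ * Real.exp (x ⬝ᵥ γ) := rfl

lemma expSum_add (A : Finset (Fin n → ℝ)) (p q : (Fin n → ℝ) → ℝ) (x : Fin n → ℝ) :
    expSum A (p + q) x = expSum A p x + expSum A q x := by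
  simp only [expSum_eq, Pi.add_apply, add_mul, sum_add_distrib]

lemma expSum_smul (A : Finset (Fin n → ℝ)) (r : ℝ) (p : (Fin n → ℝ) → ℝ) (x : Fin n → ℝ) :
    expSum A (r • p) x = r * expSum A p x := by
  simp only [expSum_eq, Pi.smul_apply, smul_eq_mul, mul_sum, mul_assoc]

/-- `p` lies in the AGE cone of `A` at `γ` (the building blocks of SAGE decompositions). -/
def IsAGE (A : Finset (Fin n → ℝ)) (γ : Fin n → ℝ) (p : (Fin n → ℝ) → ℝ) : Prop :=
  (∀ α ∈ A, α ≠ γ → 0 ≤ p α) ∧ ∀ x, 0 ≤ expSum A p x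

namespace IsAGE

variable {A : Finset (Fin n → ℝ)} {γ j : Fin n → ℝ} {p q : (Fin n → ℝ) → ℝ}

lemma zero : IsAGE A γ 0 :=
  ⟨fun _ _ _ => le_rfl, fun x => by simp [expSum_eq]⟩

lemma add (hp : IsAGE A γ p) (hq : IsAGE A γ q) : IsAGE A γ (p + q) :=
  ⟨fun α hα hαγ => add_nonneg (hp.1 α hα hαγ) (hq.1 α hα hαγ),
    fun x => (expSum_add A p q x).symm ▸ add_nonneg (hp.2 x) (hq.2 x)⟩

lemma smul (hp : IsAGE A γ p) {r : ℝ} (hr : 0 ≤ r) : IsAGE A γ (r • p) :=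
  ⟨fun α hα hαγ => mul_nonneg hr (hp.1 α hα hαγ),
    fun x => (expSum_smul A r p x).symm ▸ mul_nonneg hr (hp.2 x)⟩

lemma sum {ι : Type*} {s : Finset ι} {d : ι → (Fin n → ℝ) → ℝ} (hd : ∀ i ∈ s, IsAGE A γ (d i)) :
    IsAGE A γ (∑ i ∈ s, d i) :=
  Finset.sum_induction d (IsAGE A γ) (fun _ _ => add) zero hd

lemma add_smul (hp : IsAGE A γ p) (hq : IsAGE A j q) {t : ℝ} (ht : 0 ≤ t)
    (hj : 0 ≤ p j + t * q j) : IsAGE A γ (p + t • q) := by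
  refine ⟨fun α hα hαγ => ?_, fun x => ?_⟩
  · rcases eq_or_ne α j with rfl | hαj
    · exact hj
    · exact add_nonneg (hp.1 α hα hαγ) (mul_nonneg ht (hq.1 α hα hαj))
  · rw [expSum_add, expSum_smul]
    exact add_nonneg (hp.2 x) (mul_nonneg ht (hq.2 x))

end IsAGE

section Pairing

variable {Ap An : Finset (Fin n → ℝ)}

lemma sum_union_eq_sum_add (hdisj : Disjoint Ap An)
    {β : Fin n → ℝ} (hβ : β ∈ An) {f : (Fin n → ℝ) → ℝ} (hf : ∀ γ ∈ An, γ ≠ β → f γ = 0) :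
    ∑ γ ∈ Ap ∪ An, f γ = ∑ α ∈ Ap, f α + f β := by
  rw [Finset.sum_union hdisj, Finset.sum_eq_single_of_mem β hβ hf]

lemma inSAGE_of_expSum_nonneg {c : (Fin n → ℝ) → ℝ} (hcAp : ∀ α ∈ Ap, 0 ≤ c α)
    (hcAn : ∀ β ∈ An, c β ≤ 0)
    (hneg : ∀ γ₁ ∈ Ap ∪ An, ∀ γ₂ ∈ Ap ∪ An, c γ₁ < 0 → c γ₂ < 0 → γ₁ = γ₂)
    (hexp : ∀ x, 0 ≤ expSum (Ap ∪ An) c x) : InSAGE Ap An c :=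
  ⟨hcAp, hcAn, 1, fun _ => c, fun _ _ => by simp, fun _ => hneg, fun _ => hexp⟩

lemma nonneg_of_mem_dualCone (hdisj : Disjoint Ap An) {v : (Fin n → ℝ) → ℝ}
    (hv : v ∈ dualCone (Ap ∪ An) {c | InSAGE Ap An c}) {α : Fin n → ℝ} (hα : α ∈ Ap) :
    0 ≤ v α := by
  classical
  have hnonneg : ∀ γ, 0 ≤ (Pi.single α 1 : (Fin n → ℝ) → ℝ) γ := fun γ =>
    (Pi.single_nonneg.2 zero_le_one : (0 : (Fin n → ℝ) → ℝ) ≤ Pi.single α 1) γ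
  have hc : InSAGE Ap An (Pi.single α 1) := inSAGE_of_expSum_nonneg (fun γ _ => hnonneg γ)
    (fun β hβ => (Pi.single_eq_of_ne
      (ne_of_mem_of_not_mem hβ (Finset.disjoint_left.1 hdisj hα)) _).le)
    (fun γ₁ _ _ _ h => absurd h (not_lt.2 (hnonneg γ₁)))
    (fun x => Finset.sum_nonneg fun γ _ => mul_nonneg (hnonneg γ) (Real.exp_pos _).le)
  simpa [Pi.single_apply, hα] using hv _ hc

lemma prod_rpow_mul_exp_le {β : Fin n → ℝ} {lam s : (Fin n → ℝ) → ℝ} (hlam : IsBary Ap β lam)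
    (hs : ∀ α ∈ Ap, 0 ≤ s α) (x : Fin n → ℝ) :
    (∏ α ∈ Ap, s α ^ lam α) * Real.exp (x ⬝ᵥ β) ≤
      ∑ α ∈ Ap, lam α * s α * Real.exp (x ⬝ᵥ α) := by
  obtain ⟨hlam₀, hlam₁, hlamβ⟩ := hlam
  have hxβ : x ⬝ᵥ β = ∑ α ∈ Ap, x ⬝ᵥ α * lam α := by
    simp only [← hlamβ, dotProduct_sum, dotProduct_smul, smul_eq_mul, mul_comm]
  calc (∏ α ∈ Ap, s α ^ lam α) * Real.exp (x ⬝ᵥ β)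
      = ∏ α ∈ Ap, (s α * Real.exp (x ⬝ᵥ α)) ^ lam α := by
        rw [hxβ, Real.exp_sum, ← Finset.prod_mul_distrib]
        exact Finset.prod_congr rfl fun α hα => by
          rw [Real.mul_rpow (hs α hα) (Real.exp_pos _).le, Real.exp_mul]
    _ ≤ ∑ α ∈ Ap, lam α * (s α * Real.exp (x ⬝ᵥ α)) :=
        Real.geom_mean_le_arith_mean_weighted Ap lam _ hlam₀ hlam₁
          fun α hα => mul_nonneg (hs α hα) (Real.exp_pos _).le
    _ = ∑ α ∈ Ap, lam α * s α * Real.exp (x ⬝ᵥ α) :=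
        Finset.sum_congr rfl fun _ _ => (mul_assoc _ _ _).symm

noncomputable def amgmVector (Ap : Finset (Fin n → ℝ)) (β : Fin n → ℝ) (lam s : (Fin n → ℝ) → ℝ) :
    (Fin n → ℝ) → ℝ :=
  fun γ => if γ ∈ Ap then lam γ * s γ else if γ = β then -∏ α ∈ Ap, s α ^ lam α else 0

section amgmVector

variable {β : Fin n → ℝ} {lam s : (Fin n → ℝ) → ℝ}

lemma amgmVector_of_mem_right (hdisj : Disjoint Ap An) {γ : Fin n → ℝ} (hγ : γ ∈ An) :
    amgmVector Ap β lam s γ = if γ = β then -∏ α ∈ Ap, s α ^ lam α else 0 :=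
  if_neg (Finset.disjoint_right.1 hdisj hγ)

lemma sum_mul_amgmVector (hdisj : Disjoint Ap An) (hβ : β ∈ An) (g : (Fin n → ℝ) → ℝ) :
    ∑ γ ∈ Ap ∪ An, g γ * amgmVector Ap β lam s γ =
      ∑ α ∈ Ap, g α * (lam α * s α) - g β * ∏ α ∈ Ap, s α ^ lam α := by
  rw [sum_union_eq_sum_add hdisj hβ fun γ hγ hγβ => by
      rw [amgmVector_of_mem_right hdisj hγ, if_neg hγβ, mul_zero],
    amgmVector_of_mem_right hdisj hβ, if_pos rfl,
    Finset.sum_congr rfl fun α hα => by rw [amgmVector, if_pos hα]]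
  ring

lemma inSAGE_amgmVector (hdisj : Disjoint Ap An) (hβ : β ∈ An) (hlam : IsBary Ap β lam)
    (hs : ∀ α ∈ Ap, 0 ≤ s α) : InSAGE Ap An (amgmVector Ap β lam s) := by
  have hprod : 0 ≤ ∏ α ∈ Ap, s α ^ lam α :=
    Finset.prod_nonneg fun α hα => Real.rpow_nonneg (hs α hα) _
  have hAp : ∀ α ∈ Ap, 0 ≤ amgmVector Ap β lam s α := fun α hα => by
    rw [amgmVector, if_pos hα]
    exact mul_nonneg (hlam.1 α hα) (hs α hα)
  have hneg : ∀ γ ∈ Ap ∪ An, amgmVector Ap β lam s γ < 0 → γ = β := by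
    intro γ hγ hγneg
    rcases Finset.mem_union.1 hγ with hγAp | hγAn
    · exact absurd hγneg (not_lt.2 (hAp γ hγAp))
    · rw [amgmVector_of_mem_right hdisj hγAn] at hγneg
      by_contra hγβ
      simp [hγβ] at hγneg
  refine inSAGE_of_expSum_nonneg hAp (fun γ hγ => ?_)
    (fun γ₁ h₁ γ₂ h₂ hn₁ hn₂ => (hneg γ₁ h₁ hn₁).trans (hneg γ₂ h₂ hn₂).symm) (fun x => ?_)
  · rw [amgmVector_of_mem_right hdisj hγ]
    split_ifs <;> linarith
  · have := prod_rpow_mul_exp_le hlam hs x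
    rw [expSum_eq]
    simp only [mul_comm (amgmVector Ap β lam s _), sum_mul_amgmVector hdisj hβ]
    simp only [mul_comm (Real.exp _)] at this ⊢
    linarith

end amgmVector

lemma mul_prod_rpow_le_of_mem_dualCone (hdisj : Disjoint Ap An) {v : (Fin n → ℝ) → ℝ}
    (hv : v ∈ dualCone (Ap ∪ An) {c | InSAGE Ap An c}) {β : Fin n → ℝ} (hβ : β ∈ An)
    {lam : (Fin n → ℝ) → ℝ} (hlam : IsBary Ap β lam) {s : (Fin n → ℝ) → ℝ}
    (hs : ∀ α ∈ Ap, 0 ≤ s α) :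
    v β * ∏ α ∈ Ap, s α ^ lam α ≤ ∑ α ∈ Ap, v α * (lam α * s α) := by
  have := hv _ (inSAGE_amgmVector hdisj hβ hlam hs)
  rw [sum_mul_amgmVector hdisj hβ] at this
  linarith

lemma le_prod_rpow_of_mem_dualCone (hdisj : Disjoint Ap An) {v : (Fin n → ℝ) → ℝ}
    (hv : v ∈ dualCone (Ap ∪ An) {c | InSAGE Ap An c}) {β : Fin n → ℝ} (hβ : β ∈ An)
    {lam : (Fin n → ℝ) → ℝ} (hlam : IsBary Ap β lam) :
    v β ≤ ∏ α ∈ Ap, v α ^ lam α := by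
  have hv₀ : ∀ α ∈ Ap, 0 ≤ v α := fun α hα => nonneg_of_mem_dualCone hdisj hv hα
  have hlim := le_of_forall_pos_le_of_continuous (a := v β)
    (f := fun η => ∏ α ∈ Ap, (v α + η) ^ lam α)
    (continuous_finsetProd _ fun α hα =>
      (Real.continuous_rpow_const (hlam.1 α hα)).comp (continuous_const_add (v α)))
  simp only [add_zero] at hlim
  refine hlim fun η hη => ?_
  have hpos : ∀ α ∈ Ap, 0 < v α + η := fun α hα => add_pos_of_nonneg_of_pos (hv₀ α hα) hη
  have hP : 0 < ∏ α ∈ Ap, (v α + η) ^ lam α :=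
    Finset.prod_pos fun α hα => Real.rpow_pos_of_pos (hpos α hα) _
  have key := mul_prod_rpow_le_of_mem_dualCone hdisj hv hβ hlam
    (s := fun α => (v α + η)⁻¹) fun α hα => (inv_pos.2 (hpos α hα)).le
  have hinv : ∏ α ∈ Ap, (v α + η)⁻¹ ^ lam α = (∏ α ∈ Ap, (v α + η) ^ lam α)⁻¹ := by
    rw [← Finset.prod_inv_distrib]
    exact Finset.prod_congr rfl fun α hα => Real.inv_rpow (hpos α hα).le _
  have hle : ∑ α ∈ Ap, v α * (lam α * (v α + η)⁻¹) ≤ 1 := by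
    rw [← hlam.2.1]
    refine Finset.sum_le_sum fun α hα => ?_
    rw [mul_left_comm, ← div_eq_mul_inv]
    exact mul_le_of_le_one_right (hlam.1 α hα)
      ((div_le_one (hpos α hα)).2 (le_add_of_nonneg_right hη.le))
  rw [hinv] at key
  simpa using (mul_inv_le_iff₀ hP).1 (key.trans hle)

lemma exists_dotProduct_sub_le_add {S : Finset (Fin n → ℝ)} {β : Fin n → ℝ}
    {c : (Fin n → ℝ) → ℝ} (hc : ∀ lam, IsBary S β lam → 0 ≤ ∑ α ∈ S, lam α * c α)
    {δ : ℝ} (hδ : 0 < δ) : ∃ x : Fin n → ℝ, ∀ α ∈ S, x ⬝ᵥ α - x ⬝ᵥ β ≤ c α + δ := by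
  obtain ⟨f, hf⟩ := exists_strongDual_sub_le_add (fun lam h0 h1 h2 => hc lam ⟨h0, h1, h2⟩) hδ
  have hfx : ∀ y, f y = (fun i => f fun j => if i = j then 1 else 0) ⬝ᵥ y := fun y => by
    rw [dotProduct, ← ContinuousLinearMap.coe_coe, LinearMap.pi_apply_eq_sum_univ]
    simp only [smul_eq_mul, mul_comm, ContinuousLinearMap.coe_coe]
  exact ⟨_, fun α hα => hfx α ▸ hfx β ▸ hf α hα⟩

lemma log_le_sum_mul_log_add {β : Fin n → ℝ} {v lam : (Fin n → ℝ) → ℝ}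
    (hv₀ : ∀ α ∈ Ap, 0 ≤ v α) (hvβ : 0 < v β) (hv : v β ≤ ∏ α ∈ Ap, v α ^ lam α)
    (hlam : ∀ α ∈ Ap, 0 ≤ lam α) {η : ℝ} (hη : 0 < η) :
    Real.log (v β) ≤ ∑ α ∈ Ap, lam α * Real.log (v α + η) := by
  have hpos : ∀ α ∈ Ap, 0 < v α + η := fun α hα => add_pos_of_nonneg_of_pos (hv₀ α hα) hη
  have hle : v β ≤ ∏ α ∈ Ap, (v α + η) ^ lam α := hv.trans <| Finset.prod_le_prod
    (fun α hα => Real.rpow_nonneg (hv₀ α hα) _)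
    (fun α hα => Real.rpow_le_rpow (hv₀ α hα) (by linarith) (hlam α hα))
  calc Real.log (v β) ≤ Real.log (∏ α ∈ Ap, (v α + η) ^ lam α) := Real.log_le_log hvβ hle
    _ = ∑ α ∈ Ap, lam α * Real.log (v α + η) := by
      rw [Real.log_prod fun α hα => (Real.rpow_pos_of_pos (hpos α hα) _).ne']
      exact Finset.sum_congr rfl fun α hα => Real.log_rpow (hpos α hα) _

lemma mul_exp_le_of_sub_le_log_sub {a b y z η : ℝ} (hy : 0 < y) (hz : 0 < z)
    (h : a - b ≤ Real.log z - Real.log y + η) :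
    y * Real.exp a ≤ Real.exp b * (Real.exp η * z) := by
  calc y * Real.exp a = Real.exp (Real.log y + a) := by rw [Real.exp_add, Real.exp_log hy]
    _ ≤ Real.exp (b + (η + Real.log z)) := Real.exp_le_exp.2 (by linarith)
    _ = Real.exp b * (Real.exp η * z) := by rw [Real.exp_add, Real.exp_add, Real.exp_log hz]

lemma mul_le_sum_mul_of_le_sum_exp {β : Fin n → ℝ}
    {p v : (Fin n → ℝ) → ℝ} {b : ℝ} (hb : 0 ≤ b) (hp : ∀ α ∈ Ap, 0 ≤ p α)
    (hv₀ : ∀ α ∈ Ap, 0 ≤ v α) (hv : ∀ lam, IsBary Ap β lam → v β ≤ ∏ α ∈ Ap, v α ^ lam α)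
    (hexp : ∀ x, b * Real.exp (x ⬝ᵥ β) ≤ ∑ α ∈ Ap, p α * Real.exp (x ⬝ᵥ α)) :
    b * v β ≤ ∑ α ∈ Ap, v α * p α := by
  rcases le_or_gt (v β) 0 with hvβ | hvβ
  · exact (mul_nonpos_of_nonneg_of_nonpos hb hvβ).trans
      (Finset.sum_nonneg fun α hα => mul_nonneg (hv₀ α hα) (hp α hα))
  have hlim := le_of_forall_pos_le_of_continuous
    (f := fun η => Real.exp η * ∑ α ∈ Ap, (v α + η) * p α) (by fun_prop) (a := b * v β)
  simp only [Real.exp_zero, one_mul, add_zero] at hlim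
  refine hlim fun η hη => ?_
  obtain ⟨x, hx⟩ := exists_dotProduct_sub_le_add
    (c := fun α => Real.log (v α + η) - Real.log (v β))
    (fun lam hlam => by
      have := log_le_sum_mul_log_add hv₀ hvβ (hv lam hlam) hlam.1 hη
      simp only [mul_sub, Finset.sum_sub_distrib, ← Finset.sum_mul, hlam.2.1, one_mul]
      linarith) hη
  have hαβ : ∀ α ∈ Ap,
      v β * Real.exp (x ⬝ᵥ α) ≤ Real.exp (x ⬝ᵥ β) * (Real.exp η * (v α + η)) := fun α hα =>
    mul_exp_le_of_sub_le_log_sub hvβ (add_pos_of_nonneg_of_pos (hv₀ α hα) hη) (hx α hα)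
  have hexpβ := Real.exp_pos (x ⬝ᵥ β)
  refine le_of_mul_le_mul_left ?_ hexpβ
  calc Real.exp (x ⬝ᵥ β) * (b * v β) = v β * (b * Real.exp (x ⬝ᵥ β)) := by ring
    _ ≤ v β * ∑ α ∈ Ap, p α * Real.exp (x ⬝ᵥ α) := mul_le_mul_of_nonneg_left (hexp x) hvβ.le
    _ = ∑ α ∈ Ap, p α * (v β * Real.exp (x ⬝ᵥ α)) := by
          rw [Finset.mul_sum]; exact Finset.sum_congr rfl fun _ _ => by ring
    _ ≤ ∑ α ∈ Ap, p α * (Real.exp (x ⬝ᵥ β) * (Real.exp η * (v α + η))) :=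
          Finset.sum_le_sum fun α hα => mul_le_mul_of_nonneg_left (hαβ α hα) (hp α hα)
    _ = Real.exp (x ⬝ᵥ β) * (Real.exp η * ∑ α ∈ Ap, (v α + η) * p α) := by
          rw [Finset.mul_sum, Finset.mul_sum]; exact Finset.sum_congr rfl fun _ _ => by ring

lemma sum_mul_nonneg_of_isAGE (hdisj : Disjoint Ap An)
    {v : (Fin n → ℝ) → ℝ} (hv₀ : ∀ α ∈ Ap, 0 ≤ v α)
    (hv : ∀ β ∈ An, ∀ lam, IsBary Ap β lam → v β ≤ ∏ α ∈ Ap, v α ^ lam α)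
    {γ : Fin n → ℝ} {p : (Fin n → ℝ) → ℝ} (hp : IsAGE (Ap ∪ An) γ p)
    (hpAp : ∀ α ∈ Ap, 0 ≤ p α) (hpAn : ∀ β ∈ An, p β ≤ 0) :
    0 ≤ ∑ δ ∈ Ap ∪ An, v δ * p δ := by
  have hzero : ∀ β ∈ An, β ≠ γ → p β = 0 := fun β hβ hβγ =>
    le_antisymm (hpAn β hβ) (hp.1 β (Finset.mem_union_right _ hβ) hβγ)
  by_cases hγ : γ ∈ An
  · have hsplit : ∀ g : (Fin n → ℝ) → ℝ,
        ∑ δ ∈ Ap ∪ An, g δ * p δ = ∑ α ∈ Ap, g α * p α + g γ * p γ := fun g =>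
      sum_union_eq_sum_add hdisj hγ fun β hβ hβγ => by rw [hzero β hβ hβγ, mul_zero]
    have hb := mul_le_sum_mul_of_le_sum_exp (neg_nonneg.2 (hpAn γ hγ)) hpAp hv₀ (hv γ hγ)
      fun x => by
        have := hp.2 x
        rw [expSum_eq] at this
        simp only [mul_comm (p _)] at this ⊢
        rw [hsplit] at this
        linarith
    rw [hsplit]
    linarith
  · rw [Finset.sum_union hdisj, Finset.sum_eq_zero (s := An) fun β hβ => by
      rw [hzero β hβ fun h => hγ (h ▸ hβ), mul_zero], add_zero]
    exact Finset.sum_nonneg fun α hα => mul_nonneg (hv₀ α hα) (hpAp α hα)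

end Pairing

section Regrouping

variable {A : Finset (Fin n → ℝ)}

lemma exists_isAGE (hA : A.Nonempty) {p : (Fin n → ℝ) → ℝ}
    (hneg : ∀ γ₁ ∈ A, ∀ γ₂ ∈ A, p γ₁ < 0 → p γ₂ < 0 → γ₁ = γ₂)
    (hexp : ∀ x, 0 ≤ expSum A p x) : ∃ γ ∈ A, IsAGE A γ p := by
  by_cases h : ∃ γ ∈ A, p γ < 0
  · obtain ⟨γ, hγ, hpγ⟩ := h
    exact ⟨γ, hγ, fun α hα hαγ => not_lt.1 fun hpα => hαγ (hneg α hα γ hγ hpα hpγ), hexp⟩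
  · push Not at h
    obtain ⟨γ, hγ⟩ := hA
    exact ⟨γ, hγ, fun α hα _ => h α hα, hexp⟩

/-- Group the pieces `d i` by the position of their negative coefficient. -/
lemma exists_isAGE_family {ι : Type*} [Fintype ι]
    {d : ι → (Fin n → ℝ) → ℝ} (hd : ∀ i, ∃ γ ∈ A, IsAGE A γ (d i)) :
    ∃ P : (Fin n → ℝ) → (Fin n → ℝ) → ℝ,
      (∀ γ ∈ A, IsAGE A γ (P γ)) ∧ ∀ α, ∑ γ ∈ A, P γ α = ∑ i, d i α := by
  classical
  choose g hgA hg using hd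
  refine ⟨fun γ => (∑ i with g i = γ, d i : (Fin n → ℝ) → ℝ), fun γ _ => IsAGE.sum ?_, fun α => ?_⟩
  · intro i hi
    rw [(Finset.mem_filter.1 hi).2.symm]
    exact hg i
  · simp only [Finset.sum_apply]
    exact Finset.sum_fiberwise_of_maps_to (fun i _ => hgA i) _

variable {P : (Fin n → ℝ) → (Fin n → ℝ) → ℝ}

/-- `P γ` is the piece whose negative coefficient sits at `γ`. At a balanced point `k` the
coefficients of all pieces at `k` have the sign of their sum. -/
def IsBalancedAt (A : Finset (Fin n → ℝ)) (P : (Fin n → ℝ) → (Fin n → ℝ) → ℝ)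
    (k : Fin n → ℝ) : Prop :=
  0 ≤ P k k ∨ ∀ γ ∈ A, γ ≠ k → P γ k ≤ 0

noncomputable def transfer (P : (Fin n → ℝ) → (Fin n → ℝ) → ℝ) (j : Fin n → ℝ) (r : ℝ)
    (t : (Fin n → ℝ) → ℝ) : (Fin n → ℝ) → (Fin n → ℝ) → ℝ :=
  fun γ => if γ = j then r • P j else P γ + t γ • P j

variable {j k : Fin n → ℝ} {r : ℝ} {t : (Fin n → ℝ) → ℝ}

lemma transfer_self : transfer P j r t j = r • P j := if_pos rfl

lemma transfer_of_ne {γ : Fin n → ℝ} (hγ : γ ≠ j) : transfer P j r t γ = P γ + t γ • P j :=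
  if_neg hγ

lemma sum_transfer (hj : j ∈ A) (hrt : r + ∑ γ ∈ A.erase j, t γ = 1) (α : Fin n → ℝ) :
    ∑ γ ∈ A, transfer P j r t γ α = ∑ γ ∈ A, P γ α := by
  have hsum : ∑ γ ∈ A.erase j, transfer P j r t γ α
      = ∑ γ ∈ A.erase j, P γ α + (∑ γ ∈ A.erase j, t γ) * P j α := by
    rw [Finset.sum_mul, ← Finset.sum_add_distrib]
    refine Finset.sum_congr rfl fun γ hγ => ?_
    simp [transfer_of_ne (Finset.ne_of_mem_erase hγ)]
  rw [← Finset.add_sum_erase A _ hj, ← Finset.add_sum_erase A _ hj, hsum,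
    eq_sub_iff_add_eq'.2 hrt, transfer_self, Pi.smul_apply, smul_eq_mul]
  ring

lemma IsBalancedAt.transfer (hbal : IsBalancedAt A P k) (hj : j ∈ A) (hk : k ∈ A)
    (hkj : k ≠ j) (hPj : IsAGE A j (P j)) (hr : 0 ≤ r) (ht : ∀ γ ∈ A, γ ≠ j → 0 ≤ t γ) :
    IsBalancedAt A (transfer P j r t) k := by
  rcases hbal with hkk | hγk
  · left
    rw [transfer_of_ne hkj, Pi.add_apply, Pi.smul_apply, smul_eq_mul]
    exact add_nonneg hkk (mul_nonneg (ht k hk hkj) (hPj.1 k hk hkj))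
  · right
    intro γ hγ hγk'
    have hjk : P j k ≤ 0 := hγk j hj hkj.symm
    rcases eq_or_ne γ j with rfl | hγj
    · rw [transfer_self, Pi.smul_apply, smul_eq_mul]
      exact mul_nonpos_of_nonneg_of_nonpos hr hjk
    · rw [transfer_of_ne hγj, Pi.add_apply, Pi.smul_apply, smul_eq_mul]
      exact add_nonpos (hγk γ hγ hγk') (mul_nonpos_of_nonneg_of_nonpos (ht γ hγ hγj) hjk)

lemma isBalancedAt_of_sum_erase_nonpos (hP : ∀ γ ∈ A, IsAGE A γ (P γ)) (hj : j ∈ A)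
    (h : ∑ γ ∈ A.erase j, P γ j ≤ 0) : IsBalancedAt A P j :=
  Or.inr fun _ hγ hγj => (Finset.single_le_sum (fun δ hδ => (hP δ (Finset.mem_of_mem_erase hδ)).1
    j hj (Finset.ne_of_mem_erase hδ).symm) (Finset.mem_erase.2 ⟨hγj, hγ⟩)).trans h

/-- The piece `P j` is spread over the pieces that are positive at `j`, in proportion to their
coefficient at `j`, until either `P j` is used up or those coefficients are cancelled. -/
lemma exists_isBalancedAt (hP : ∀ γ ∈ A, IsAGE A γ (P γ)) (hj : j ∈ A) :
    ∃ P' : (Fin n → ℝ) → (Fin n → ℝ) → ℝ, (∀ γ ∈ A, IsAGE A γ (P' γ)) ∧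
      (∀ α, ∑ γ ∈ A, P' γ α = ∑ γ ∈ A, P γ α) ∧ IsBalancedAt A P' j ∧
      ∀ k ∈ A, k ≠ j → IsBalancedAt A P k → IsBalancedAt A P' k := by
  set a := P j j
  set Q := ∑ γ ∈ A.erase j, P γ j
  have hQ : ∀ γ ∈ A, γ ≠ j → 0 ≤ P γ j := fun γ hγ hγj => (hP γ hγ).1 j hj hγj.symm
  by_cases h : a < 0 ∧ 0 < Q
  swap
  · rw [not_and_or, not_lt, not_lt] at h
    exact ⟨P, hP, fun _ => rfl, h.elim Or.inl (isBalancedAt_of_sum_erase_nonpos hP hj),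
      fun _ _ _ hbal => hbal⟩
  obtain ⟨ha, hQpos⟩ := h
  set s := max (-a) Q
  have hs : 0 < s := hQpos.trans_le (le_max_right _ _)
  have hr : 0 ≤ 1 - Q / s := sub_nonneg.2 ((div_le_one hs).2 (le_max_right _ _))
  have ht : ∀ γ ∈ A, γ ≠ j → 0 ≤ P γ j / s := fun γ hγ hγj => div_nonneg (hQ γ hγ hγj) hs.le
  refine ⟨transfer P j (1 - Q / s) (fun γ => P γ j / s), fun γ hγ => ?_, sum_transfer hj ?_,
    ?_, fun k hk hkj hbal => hbal.transfer hj hk hkj (hP j hj) hr ht⟩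
  · rcases eq_or_ne γ j with rfl | hγj
    · rw [transfer_self]
      exact (hP γ hγ).smul hr
    · rw [transfer_of_ne hγj]
      refine (hP γ hγ).add_smul (hP j hj) (ht γ hγ hγj) ?_
      have : -a ≤ s := le_max_left _ _
      calc 0 ≤ P γ j * (s + a) / s :=
            div_nonneg (mul_nonneg (hQ γ hγ hγj) (by linarith)) hs.le
        _ = P γ j + P γ j / s * a := by field_simp
  · rw [← Finset.sum_div]
    field_simp
    ring
  · rcases le_total (-a) Q with hle | hle
    · left
      have hsQ : s = Q := max_eq_right hle
      rw [transfer_self, Pi.smul_apply, smul_eq_mul, hsQ, div_self hQpos.ne', sub_self, zero_mul]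
    · right
      intro γ hγ hγj
      have hsa : s = -a := max_eq_left hle
      have hcancel : P γ j / -a * a = -P γ j := by field_simp [ha.ne]
      rw [transfer_of_ne hγj, Pi.add_apply, Pi.smul_apply, smul_eq_mul, hsa, hcancel,
        add_neg_cancel]

lemma exists_isBalanced_family (hP : ∀ γ ∈ A, IsAGE A γ (P γ)) :
    ∃ P' : (Fin n → ℝ) → (Fin n → ℝ) → ℝ, (∀ γ ∈ A, IsAGE A γ (P' γ)) ∧
      (∀ α, ∑ γ ∈ A, P' γ α = ∑ γ ∈ A, P γ α) ∧ ∀ k ∈ A, IsBalancedAt A P' k := by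
  classical
  suffices ∀ D ⊆ A, ∃ P' : (Fin n → ℝ) → (Fin n → ℝ) → ℝ, (∀ γ ∈ A, IsAGE A γ (P' γ)) ∧
      (∀ α, ∑ γ ∈ A, P' γ α = ∑ γ ∈ A, P γ α) ∧ ∀ k ∈ D, IsBalancedAt A P' k from
    this A subset_rfl
  intro D
  induction D using Finset.induction_on with
  | empty => exact fun _ => ⟨P, hP, fun _ => rfl, by simp⟩
  | insert j D hjD ih =>
    intro hD
    obtain ⟨P₁, hP₁, hsum₁, hbal₁⟩ := ih ((Finset.subset_insert j D).trans hD)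
    obtain ⟨P₂, hP₂, hsum₂, hbalj, hpres⟩ :=
      exists_isBalancedAt hP₁ (hD (Finset.mem_insert_self j D))
    refine ⟨P₂, hP₂, fun α => (hsum₂ α).trans (hsum₁ α), fun k hk => ?_⟩
    rcases Finset.mem_insert.1 hk with rfl | hkD
    · exact hbalj
    · exact hpres k (hD hk) (fun h => hjD (h ▸ hkD)) (hbal₁ k hkD)

lemma IsBalancedAt.nonneg (hbal : IsBalancedAt A P k) (hP : ∀ γ ∈ A, IsAGE A γ (P γ))
    (hk : k ∈ A) (hc : 0 ≤ ∑ γ ∈ A, P γ k) {γ : Fin n → ℝ} (hγ : γ ∈ A) : 0 ≤ P γ k := by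
  rcases eq_or_ne γ k with rfl | hγk
  · rcases hbal with hkk | hothers
    · exact hkk
    · rw [← Finset.add_sum_erase A _ hk] at hc
      have : ∑ δ ∈ A.erase γ, P δ γ ≤ 0 := Finset.sum_nonpos fun δ hδ =>
        hothers δ (Finset.mem_of_mem_erase hδ) (Finset.ne_of_mem_erase hδ)
      linarith
  · exact (hP γ hγ).1 k hk hγk.symm

lemma IsBalancedAt.nonpos (hbal : IsBalancedAt A P k) (hP : ∀ γ ∈ A, IsAGE A γ (P γ))
    (hk : k ∈ A) (hc : ∑ γ ∈ A, P γ k ≤ 0) {γ : Fin n → ℝ} (hγ : γ ∈ A) : P γ k ≤ 0 := by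
  have hothers : ∀ δ ∈ A, δ ≠ k → 0 ≤ P δ k := fun δ hδ hδk => (hP δ hδ).1 k hk hδk.symm
  rcases eq_or_ne γ k with rfl | hγk
  · rw [← Finset.add_sum_erase A _ hk] at hc
    have : 0 ≤ ∑ δ ∈ A.erase γ, P δ γ := Finset.sum_nonneg fun δ hδ =>
      hothers δ (Finset.mem_of_mem_erase hδ) (Finset.ne_of_mem_erase hδ)
    linarith
  · rcases hbal with hkk | hnonpos
    · have hall : ∀ δ ∈ A, 0 ≤ P δ k := fun δ hδ =>
        (eq_or_ne δ k).elim (fun h => h ▸ hkk) (hothers δ hδ)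
      exact (Finset.single_le_sum hall hγ).trans hc
    · exact hnonpos γ hγ hγk

end Regrouping

end SAGE

theorem dual_sage_description_general {n : ℕ}
    (Ap An : Finset (Fin n → ℝ)) (hdisj : Disjoint Ap An)
    (hAp : Ap.Nonempty) :
    dualCone (Ap ∪ An) {c | InSAGE Ap An c}
      = {v | (∀ α ∈ Ap, 0 ≤ v α) ∧
          ∀ β ∈ An, ∀ lam : (Fin n → ℝ) → ℝ, IsBary Ap β lam →
            v β ≤ ∏ α ∈ Ap, v α ^ lam α} := by
  ext v
  constructor
  · intro hv
    exact ⟨fun α hα => SAGE.nonneg_of_mem_dualCone hdisj hv hα,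
      fun β hβ lam hlam => SAGE.le_prod_rpow_of_mem_dualCone hdisj hv hβ hlam⟩
  · rintro ⟨hv₀, hv⟩ c ⟨hcAp, hcAn, m, d, hcd, hneg, hexp⟩
    obtain ⟨P, hP, hPd⟩ := SAGE.exists_isAGE_family fun i =>
      SAGE.exists_isAGE (hAp.mono subset_union_left) (hneg i) (hexp i)
    obtain ⟨Q, hQ, hQP, hbal⟩ := SAGE.exists_isBalanced_family hP
    have hc : ∀ γ ∈ Ap ∪ An, c γ = ∑ δ ∈ Ap ∪ An, Q δ γ := fun γ hγ => by
      rw [hcd γ hγ, hQP, hPd]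
    calc 0 ≤ ∑ δ ∈ Ap ∪ An, ∑ γ ∈ Ap ∪ An, v γ * Q δ γ := sum_nonneg fun δ hδ =>
          SAGE.sum_mul_nonneg_of_isAGE hdisj hv₀ hv (hQ δ hδ)
            (fun α hα => have hα' := mem_union_left An hα
              (hbal α hα').nonneg hQ hα' (hc α hα' ▸ hcAp α hα) hδ)
            (fun β hβ => have hβ' := mem_union_right Ap hβ
              (hbal β hβ').nonpos hQ hβ' (hc β hβ' ▸ hcAn β hβ) hδ)
      _ = ∑ γ ∈ Ap ∪ An, v γ * c γ := by
        rw [sum_comm]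
        exact sum_congr rfl fun γ hγ => by rw [hc γ hγ, mul_sum]

/-- Description of the dual of the signed SONC cone via weighted geometric
means over barycentric coordinates. -/
theorem dual_sage_description {n : ℕ}
    (Ap An : Finset (Fin n → ℝ)) (hdisj : Disjoint Ap An)
    (hAp : Ap.Nonempty) (hAn : An.Nonempty) :
    dualCone (Ap ∪ An) {c | InSAGE Ap An c}
      = {v | (∀ α ∈ Ap, 0 ≤ v α) ∧
          ∀ β ∈ An, ∀ lam : (Fin n → ℝ) → ℝ, IsBary Ap β lam →
            v β ≤ ∏ α ∈ Ap, v α ^ lam α} :=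
  dual_sage_description_general Ap An hdisj hAp
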